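/- Let G be a group acting on a set M and let N ⊆ M be a subset. Define Ñ = G × N with G-action g·(h,x) = (gh, x), and ι : Ñ → M by ι(h,x) = h·x. Then ι is G-equivariant, and the following are equivalent: (i) for every p ∈ M the stabilizer G_p acts transitively on ι⁻¹(p); (ii) for every g ∈ G, N ∩ g·N = N^g, where N^g = {x ∈ N : g·x = x}. -/

import Mathlib

open scoped Pointwise

/-! Both conditions say that `N` meets every `G`-orbit of `M` at most once, in the sense
that `g • x ∈ N` for `x ∈ N` forces `g • x = x`. -/

section

variable {G M : Type*} [Group G] [MulAction G M] {N : Set M}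

theorem Set.inter_smul_set_eq_fixed_iff :
    (∀ g : G, N ∩ g • N = {x | x ∈ N ∧ g • x = x}) ↔ ∀ g : G, ∀ x ∈ N, g • x ∈ N → g • x = x := by
  constructor
  · intro h g x hx hgx
    have hmem : g • x ∈ N ∩ g • N := ⟨hgx, Set.smul_mem_smul_set hx⟩
    rw [h g] at hmem
    exact smul_left_cancel g hmem.2
  · intro h g
    ext x
    constructor
    · rintro ⟨hx, y, hy, rfl⟩
      have hfix : g • y = y := h g y hy hx
      exact ⟨hx, by simp only [hfix]⟩
    · rintro ⟨hx, hfix⟩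
      exact ⟨hx, x, hx, hfix⟩

theorem fiber_transitive_iff :
    (∀ (p : M) (h₁ h₂ : G) (x₁ x₂ : N), h₁ • (x₁ : M) = p → h₂ • (x₂ : M) = p →
        ∃ g : G, g • p = p ∧ g * h₁ = h₂ ∧ x₁ = x₂) ↔
      ∀ g : G, ∀ x ∈ N, g • x ∈ N → g • x = x := by
  constructor
  · intro h g x hx hgx
    obtain ⟨-, -, -, heq⟩ := h (g • x) 1 g ⟨g • x, hgx⟩ ⟨x, hx⟩ (one_smul G _) rfl
    exact congrArg Subtype.val heq
  · rintro h p h₁ h₂ ⟨x₁, hx₁⟩ ⟨x₂, hx₂⟩ rfl e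
    have hx : (h₁⁻¹ * h₂) • x₂ = x₁ := by rw [mul_smul, e, inv_smul_smul]
    have hx₂₁ : x₂ = x₁ := hx ▸ (h _ x₂ hx₂ (hx ▸ hx₁)).symm
    subst hx₂₁
    refine ⟨h₂ * h₁⁻¹, ?_, by group, rfl⟩
    rw [mul_smul, inv_smul_smul, e]

end

/-- Let `N ⊆ M` and `Ñ = G × N` with action `g • (h, x) = (g*h, x)` and
`ι(h, x) = h • x`. Then `ι` is `G`-equivariant, and the stabilizer `G_p` acts
transitively on every fiber `ι⁻¹(p)` iff `N ∩ g • N = N^g` for all `g`. -/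
theorem stmt_2 {G M : Type*} [Group G] [MulAction G M] (N : Set M) :
    (∀ (g h : G) (x : N), (g * h) • (x : M) = g • (h • (x : M))) ∧
    ((∀ (p : M) (h₁ h₂ : G) (x₁ x₂ : N),
        h₁ • (x₁ : M) = p → h₂ • (x₂ : M) = p →
        ∃ g : G, g • p = p ∧ g * h₁ = h₂ ∧ x₁ = x₂) ↔
      (∀ g : G, N ∩ g • N = {x | x ∈ N ∧ g • x = x})) :=
  ⟨fun g h x => mul_smul g h (x : M), fiber_transitive_iff.trans Set.inter_smul_set_eq_fixed_iff.symm⟩
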